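/- arXiv:math/0409466 — 2 statements merged into one kernel-verified Lean document; each statement's English description precedes it below -/
import Mathlib

section
/- For every n ≥ 4, σ(K_4 − P_3, n) = 2n: every n-term graphical sequence with degree sum at least 2n has a realization containing K_4 − P_3, and the bound 2n is tight. -/
open SimpleGraph

/-- The multiset of vertex degrees of a finite simple graph. -/
noncomputable def degMS {V : Type*} (G : SimpleGraph V) [Fintype V] : Multiset ℕ :=
  Finset.univ.val.map fun v => Nat.card (G.neighborSet v)

/-- `Contains G H` : `G` contains a copy of `H` as a subgraph. -/
def Contains {V W : Type*} (G : SimpleGraph V) (H : SimpleGraph W) : Prop :=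
  ∃ f : W ↪ V, ∀ a b, H.Adj a b → G.Adj (f a) (f b)

/-- `K_m - P_k` : the complete graph on `m` vertices minus the `k` edges of a path
on the vertices `0, 1, ..., k`. -/
def KmPk (m k : ℕ) : SimpleGraph (Fin m) :=
  ⊤ \ SimpleGraph.fromRel (fun i j => (i : ℕ) + 1 = (j : ℕ) ∧ (j : ℕ) ≤ k)

/-- The join `K_{m-3} + complement (K_{n-m+3})` realized on `Fin n`:
the first `m-3` vertices form a clique joined to all remaining vertices. -/
def joinH (n m : ℕ) : SimpleGraph (Fin n) :=
  SimpleGraph.fromRel (fun i _ => (i : ℕ) < m - 3)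

/-! A copy of `K₄ − P₃` is a path with three edges. In a graph without one, every neighbour of
a vertex of degree at least 3 is a leaf, and two such vertices share no neighbour. Charging the
degree of each such vertex to its leaves (charge 2 on a leaf, 0 on a vertex of degree at least 3,
the degree elsewhere) bounds the degree sum by a total charge of at most `2n`, so a degree sum of
at least `2n` forces the graph to be 2-regular; the `n`-cycle realises the same sequence and
contains the path. For tightness, the star has degree sum `2n − 2` and only one vertex of degree
at least 2, whereas a three-edge path has two. -/

open Finset

section Degrees

variable {V : Type*} [Fintype V] (G : SimpleGraph V) [DecidableRel G.Adj]

lemma degMS_eq_map_degree : degMS G = univ.val.map fun v => G.degree v := by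
  unfold degMS
  congr 1
  ext v
  rw [Nat.card_eq_fintype_card, card_neighborSet_eq_degree]

lemma sum_degMS : (degMS G).sum = ∑ v, G.degree v := by
  rw [degMS_eq_map_degree]
  rfl

lemma countP_degMS (p : ℕ → Prop) [DecidablePred p] :
    (degMS G).countP p = #{v | p (G.degree v)} := by
  rw [degMS_eq_map_degree, Multiset.countP_map]
  rfl

end Degrees

lemma SimpleGraph.IsRegularOfDegree.degMS_eq {V : Type*} [Fintype V] {G : SimpleGraph V}
    [DecidableRel G.Adj] {d : ℕ} (hG : G.IsRegularOfDegree d) :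
    degMS G = Multiset.replicate (Fintype.card V) d := by
  rw [degMS_eq_map_degree, Multiset.eq_replicate]
  refine ⟨by simp, fun b hb => ?_⟩
  obtain ⟨v, -, rfl⟩ := Multiset.mem_map.1 hb
  exact hG v

lemma contains_KmPk_four_three_iff {V : Type*} {G : SimpleGraph V} :
    Contains G (KmPk 4 3) ↔
      ∃ a b c d, G.Adj a b ∧ G.Adj b c ∧ G.Adj c d ∧ a ≠ c ∧ b ≠ d ∧ a ≠ d := by
  constructor
  · rintro ⟨f, hf⟩
    refine ⟨f 2, f 0, f 3, f 1, hf 2 0 (by simp [KmPk]), hf 0 3 (by simp [KmPk]),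
      hf 3 1 (by simp [KmPk]), ?_, ?_, ?_⟩ <;> exact f.injective.ne (by decide)
  · rintro ⟨a, b, c, d, hab, hbc, hcd, hac, hbd, had⟩
    have hinj : Function.Injective ![b, d, a, c] := by
      intro i j
      fin_cases i <;> fin_cases j <;>
        simp [hab.ne, hbc.ne, hcd.ne, hab.ne', hbc.ne', hcd.ne', hac, hbd, had, Ne.symm]
    refine ⟨⟨_, hinj⟩, fun i j hij => ?_⟩
    change G.Adj (![b, d, a, c] i) (![b, d, a, c] j)
    fin_cases i <;> fin_cases j <;> simp_all [KmPk, hab.symm, hbc.symm, hcd.symm]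

lemma forall_eq_of_forall_le_of_card_mul_le_sum {ι : Type*} [Fintype ι] {f : ι → ℕ} {k : ℕ}
    (hf : ∀ i, f i ≤ k) (h : Fintype.card ι * k ≤ ∑ i, f i) (i : ι) : f i = k := by
  have hsum : ∑ i, f i = ∑ _i : ι, k :=
    le_antisymm (sum_le_sum fun i _ => hf i) (by simpa using h)
  exact (sum_eq_sum_iff_of_le fun i _ => hf i).1 hsum i (mem_univ i)

section PathFree

variable {V : Type*} [Fintype V] [DecidableEq V] {G : SimpleGraph V} [DecidableRel G.Adj]

lemma two_le_degree_of_adj {v a b : V} (hab : a ≠ b) (ha : G.Adj v a) (hb : G.Adj v b) :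
    2 ≤ G.degree v := by
  rw [← card_neighborFinset_eq_degree, ← card_pair hab]
  exact card_le_card fun x hx => by aesop

lemma two_le_card_two_le_degree_of_contains (h : Contains G (KmPk 4 3)) :
    2 ≤ #{v | 2 ≤ G.degree v} := by
  obtain ⟨a, b, c, d, hab, hbc, hcd, hac, hbd, -⟩ := contains_KmPk_four_three_iff.1 h
  calc 2 = #{b, c} := (card_pair hbc.ne).symm
    _ ≤ _ := card_le_card <| by
      simp [insert_subset_iff, two_le_degree_of_adj hac hab.symm hbc,
        two_le_degree_of_adj hbd hbc.symm hcd]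

lemma degree_eq_one_of_adj_of_three_le_degree (hP : ¬ Contains G (KmPk 4 3)) {u v : V}
    (hv : 3 ≤ G.degree v) (hvu : G.Adj v u) : G.degree u = 1 := by
  by_contra hne
  have hu : 1 < #(G.neighborFinset u) := by
    have := G.degree_pos_iff_exists_adj u |>.2 ⟨v, hvu.symm⟩
    rw [card_neighborFinset_eq_degree]
    omega
  obtain ⟨w, hw, hwv⟩ := exists_mem_ne hu v
  obtain ⟨x, hx, hxuw⟩ := exists_mem_notMem_of_card_lt_card (s := {u, w})
    (t := G.neighborFinset v) (card_le_two.trans_lt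
      (by rw [card_neighborFinset_eq_degree]; omega))
  simp only [mem_insert, mem_singleton, not_or] at hxuw
  exact hP <| contains_KmPk_four_three_iff.2
    ⟨w, u, v, x, ((G.mem_neighborFinset u w).1 hw).symm, hvu.symm,
      (G.mem_neighborFinset v x).1 hx, hwv, Ne.symm hxuw.1, Ne.symm hxuw.2⟩

lemma sum_degree_of_three_le_le_card_degree_eq_one (hP : ¬ Contains G (KmPk 4 3)) :
    ∑ v with 3 ≤ G.degree v, G.degree v ≤ #{v | G.degree v = 1} := by
  have hdisj : (({v | 3 ≤ G.degree v} : Finset V) : Set V).PairwiseDisjoint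
      fun v => G.neighborFinset v := by
    intro a ha b hb hab
    refine disjoint_left.2 fun u hua hub => hab ?_
    simp only [coe_filter, mem_univ, true_and, Set.mem_ofPred_eq, mem_neighborFinset] at ha hua hub
    exact (degree_eq_one_iff_existsUnique_adj.1
      (degree_eq_one_of_adj_of_three_le_degree hP ha hua)).unique hua.symm hub.symm
  calc ∑ v with 3 ≤ G.degree v, G.degree v
      = #(({v | 3 ≤ G.degree v} : Finset V).biUnion fun v => G.neighborFinset v) := by
        simp [card_biUnion hdisj]
    _ ≤ #{v | G.degree v = 1} := card_le_card fun u hu => by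
        obtain ⟨v, hv, hvu⟩ := mem_biUnion.1 hu
        simp only [mem_filter, mem_univ, true_and, mem_neighborFinset] at hv hvu ⊢
        exact degree_eq_one_of_adj_of_three_le_degree hP hv hvu

lemma isRegularOfDegree_two_of_two_mul_card_le_sum_degree (hP : ¬ Contains G (KmPk 4 3))
    (hsum : 2 * Fintype.card V ≤ ∑ v, G.degree v) : G.IsRegularOfDegree 2 := by
  let c : ℕ → ℕ := fun d => if d = 1 then 2 else if 3 ≤ d then 0 else d
  have hc_le (d : ℕ) : c d ≤ 2 := by dsimp only [c]; split_ifs <;> omega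
  have hcharge : ∑ v, G.degree v ≤ ∑ v, c (G.degree v) := by
    have hsplit : ∑ v, (G.degree v + if G.degree v = 1 then 1 else 0)
        = ∑ v, (c (G.degree v) + if 3 ≤ G.degree v then G.degree v else 0) :=
      sum_congr rfl fun v _ => by dsimp only [c]; split_ifs <;> omega
    rw [sum_add_distrib, sum_add_distrib, sum_boole, ← sum_filter, Nat.cast_id] at hsplit
    have := sum_degree_of_three_le_le_card_degree_eq_one hP
    omega
  have hc : ∀ v, c (G.degree v) = 2 :=
    forall_eq_of_forall_le_of_card_mul_le_sum (fun v => hc_le _) (by omega)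
  have hdeg_le (v : V) : G.degree v ≤ 2 := by
    have := hc v
    dsimp only [c] at this
    split_ifs at this <;> omega
  exact forall_eq_of_forall_le_of_card_mul_le_sum hdeg_le (by rwa [mul_comm])

end PathFree

lemma cycleGraph_isRegularOfDegree_two (n : ℕ) : (cycleGraph (n + 3)).IsRegularOfDegree 2 :=
  fun _ => cycleGraph_degree_three_le

lemma contains_cycleGraph (n : ℕ) : Contains (cycleGraph (n + 4)) (KmPk 4 3) := by
  have h2 : 2 % (n + 4) = 2 := Nat.mod_eq_of_lt (by omega)
  have h3 : 3 % (n + 4) = 3 := Nat.mod_eq_of_lt (by omega)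
  refine contains_KmPk_four_three_iff.2 ⟨0, 1, 2, 3, ?_, ?_, ?_, ?_, ?_, ?_⟩ <;>
    first
    | exact pathGraph_le_cycleGraph (by simp [pathGraph_adj, h2, h3])
    | simp [Fin.ext_iff, h2, h3]

lemma degMS_starGraph (n : ℕ) :
    degMS (starGraph (0 : Fin (n + 1))) = n ::ₘ Multiset.replicate n 1 := by
  rw [degMS_eq_map_degree, Fin.univ_val_map, List.ofFn_succ, degree_starGraph_center]
  simp [degree_starGraph_of_ne_center, Fin.succ_ne_zero, ← Multiset.coe_replicate]

theorem stmt12 (n : ℕ) (hn : 4 ≤ n) :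
    (∀ s : Multiset ℕ, s.card = n → (∃ G : SimpleGraph (Fin n), degMS G = s) →
      2 * n ≤ s.sum →
      ∃ G : SimpleGraph (Fin n), degMS G = s ∧ Contains G (KmPk 4 3)) ∧
    (∃ s : Multiset ℕ, s.card = n ∧ (∃ G : SimpleGraph (Fin n), degMS G = s) ∧
      s.sum = 2 * n - 2 ∧
      ∀ G : SimpleGraph (Fin n), degMS G = s → ¬ Contains G (KmPk 4 3)) := by
  classical
  obtain ⟨n, rfl⟩ := Nat.exists_eq_add_of_le' hn
  refine ⟨?_, ⟨_, ?_, ⟨starGraph 0, degMS_starGraph (n + 3)⟩, ?_, fun G hG hcont => ?_⟩⟩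
  · rintro s - ⟨G, rfl⟩ hsum
    by_cases hG : Contains G (KmPk 4 3)
    · exact ⟨G, rfl, hG⟩
    have hreg := isRegularOfDegree_two_of_two_mul_card_le_sum_degree hG
      (by simpa [sum_degMS] using hsum)
    exact ⟨cycleGraph (n + 4), by rw [(cycleGraph_isRegularOfDegree_two (n + 1)).degMS_eq,
      hreg.degMS_eq], contains_cycleGraph n⟩
  · simp
  · rw [Multiset.sum_cons, Multiset.sum_replicate, smul_eq_mul]
    omega
  · have hone : (degMS G).countP (2 ≤ ·) = 1 := by
      simp [hG, Multiset.countP_eq_zero, Multiset.mem_replicate]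
    have := two_le_card_two_le_degree_of_contains hcont
    rw [countP_degMS] at hone
    omega
end

section
/- If G is a simple graph containing K_4 on vertices v1,v2,v3,v4, with y1 a neighbor of v1 outside the K_4 nonadjacent to v2,v3,v4, y2 a neighbor of v2 outside nonadjacent to v1,v3,v4, and y3 a neighbor of y1 with y3 adjacent to v1 but not adjacent to any of v2,v3,v4, then the graph obtained by removing edges y1y3, v1v4, v2y2 and adding edges y1v2, y3v4, y2v1 has the same degree sequence as G and contains K_5 − P_3 as a subgraph. -/
open SimpleGraph

/-!
The switch runs along the alternating 6-cycle `y₁ y₃ v₄ v₁ y₂ v₂`: the removed edges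
`y₁y₃, v₄v₁, y₂v₂` and the added non-edges `y₃v₄, v₁y₂, v₂y₁` alternate around it, so every
vertex of the cycle trades exactly one neighbour for a new one and all degrees are preserved.
Afterwards `v₂` is adjacent to `v₁, v₃, v₄` and (newly) to `y₁`, while `v₁y₁, v₁v₃, v₃v₄`
survive; hence `v₁, v₄, y₁, v₃, v₂` span `K₅` minus the path `v₁ v₄ y₁ v₃`.
-/

namespace SimpleGraph

variable {V : Type*} (G : SimpleGraph V) (R A : Set (Sym2 V))

def exchangeEdges : SimpleGraph V := (G \ fromEdgeSet R) ⊔ fromEdgeSet A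

variable {G R A}

@[simp]
theorem exchangeEdges_adj {u w : V} :
    (G.exchangeEdges R A).Adj u w ↔ G.Adj u w ∧ s(u, w) ∉ R ∨ s(u, w) ∈ A ∧ u ≠ w := by
  simp only [exchangeEdges, sup_adj, sdiff_adj, fromEdgeSet_adj]
  constructor
  · rintro (⟨h, hR⟩ | h)
    · exact Or.inl ⟨h, fun hm => hR ⟨hm, h.ne⟩⟩
    · exact Or.inr h
  · rintro (⟨h, hR⟩ | h)
    · exact Or.inl ⟨h, fun hm => hR hm.1⟩
    · exact Or.inr h

theorem exchangeEdges_adj_of_adj {u w : V} (h : G.Adj u w) (hR : s(u, w) ∉ R) :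
    (G.exchangeEdges R A).Adj u w :=
  exchangeEdges_adj.2 (Or.inl ⟨h, hR⟩)

theorem exchangeEdges_adj_of_mem {u w : V} (hA : s(u, w) ∈ A) (huw : u ≠ w) :
    (G.exchangeEdges R A).Adj u w :=
  exchangeEdges_adj.2 (Or.inr ⟨hA, huw⟩)

theorem neighborSet_exchangeEdges_of_forall_notMem {v : V} (hR : ∀ x, s(v, x) ∉ R)
    (hA : ∀ x, s(v, x) ∉ A) : (G.exchangeEdges R A).neighborSet v = G.neighborSet v := by
  ext x
  simp [hR, hA]

theorem neighborSet_exchangeEdges_of_forall_iff {v a b : V} (hR : ∀ x, s(v, x) ∈ R ↔ x = a)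
    (hA : ∀ x, s(v, x) ∈ A ↔ x = b) (hvb : v ≠ b) :
    (G.exchangeEdges R A).neighborSet v = insert b (G.neighborSet v \ {a}) := by
  ext x
  simp only [mem_neighborSet, exchangeEdges_adj, hR, hA, Set.mem_insert_iff, Set.mem_sdiff,
    Set.mem_singleton_iff]
  constructor
  · rintro (⟨h, hx⟩ | ⟨rfl, -⟩)
    · exact Or.inr ⟨h, hx⟩
    · exact Or.inl rfl
  · rintro (rfl | ⟨h, hx⟩)
    · exact Or.inr ⟨rfl, hvb⟩
    · exact Or.inl ⟨h, hx⟩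

theorem card_neighborSet_exchangeEdges_of_forall_iff [Finite V] {v a b : V}
    (hR : ∀ x, s(v, x) ∈ R ↔ x = a) (hA : ∀ x, s(v, x) ∈ A ↔ x = b) (hvb : v ≠ b)
    (ha : G.Adj v a) (hb : ¬ G.Adj v b) :
    Nat.card ((G.exchangeEdges R A).neighborSet v) = Nat.card (G.neighborSet v) := by
  rw [neighborSet_exchangeEdges_of_forall_iff hR hA hvb, Nat.card_coe_set_eq,
    Nat.card_coe_set_eq]
  exact Set.ncard_exchange (s := G.neighborSet v) hb ha

end SimpleGraph

open SimpleGraph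

theorem degMS_eq_of_card_neighborSet_eq {V : Type*} [Fintype V] {G H : SimpleGraph V}
    (h : ∀ v, Nat.card (H.neighborSet v) = Nat.card (G.neighborSet v)) : degMS H = degMS G :=
  Multiset.map_congr rfl fun v _ => h v

theorem degMS_exchangeEdges_hexagon {V : Type*} [Fintype V] {G : SimpleGraph V}
    {x₀ x₁ x₂ x₃ x₄ x₅ : V} (hx : [x₀, x₁, x₂, x₃, x₄, x₅].Nodup)
    (h₀₁ : G.Adj x₀ x₁) (h₂₃ : G.Adj x₂ x₃) (h₄₅ : G.Adj x₄ x₅)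
    (h₁₂ : ¬ G.Adj x₁ x₂) (h₃₄ : ¬ G.Adj x₃ x₄) (h₅₀ : ¬ G.Adj x₅ x₀) :
    degMS (G.exchangeEdges {s(x₀, x₁), s(x₂, x₃), s(x₄, x₅)} {s(x₁, x₂), s(x₃, x₄), s(x₅, x₀)})
      = degMS G := by
  simp only [List.nodup_cons, List.mem_cons, List.not_mem_nil, not_or, List.nodup_nil] at hx
  refine degMS_eq_of_card_neighborSet_eq fun v => ?_
  by_cases hv : v = x₀ ∨ v = x₁ ∨ v = x₂ ∨ v = x₃ ∨ v = x₄ ∨ v = x₅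
  · rcases hv with rfl | rfl | rfl | rfl | rfl | rfl
    · refine card_neighborSet_exchangeEdges_of_forall_iff ?_ ?_ ?_ h₀₁ (h₅₀ ·.symm) <;>
        grind [Sym2.eq_iff]
    · refine card_neighborSet_exchangeEdges_of_forall_iff ?_ ?_ ?_ h₀₁.symm h₁₂ <;>
        grind [Sym2.eq_iff]
    · refine card_neighborSet_exchangeEdges_of_forall_iff ?_ ?_ ?_ h₂₃ (h₁₂ ·.symm) <;>
        grind [Sym2.eq_iff]
    · refine card_neighborSet_exchangeEdges_of_forall_iff ?_ ?_ ?_ h₂₃.symm h₃₄ <;>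
        grind [Sym2.eq_iff]
    · refine card_neighborSet_exchangeEdges_of_forall_iff ?_ ?_ ?_ h₄₅ (h₃₄ ·.symm) <;>
        grind [Sym2.eq_iff]
    · refine card_neighborSet_exchangeEdges_of_forall_iff ?_ ?_ ?_ h₄₅.symm h₅₀ <;>
        grind [Sym2.eq_iff]
  · rw [neighborSet_exchangeEdges_of_forall_notMem] <;> grind [Sym2.eq_iff]

theorem contains_kmPk_five_three {V : Type*} {G : SimpleGraph V} {a₀ a₁ a₂ a₃ a₄ : V}
    (h₀₁ : a₀ ≠ a₁) (h₁₂ : a₁ ≠ a₂) (h₂₃ : a₂ ≠ a₃)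
    (h₀₂ : G.Adj a₀ a₂) (h₀₃ : G.Adj a₀ a₃) (h₀₄ : G.Adj a₀ a₄) (h₁₃ : G.Adj a₁ a₃)
    (h₁₄ : G.Adj a₁ a₄) (h₂₄ : G.Adj a₂ a₄) (h₃₄ : G.Adj a₃ a₄) :
    Contains G (KmPk 5 3) := by
  have hinj : Function.Injective ![a₀, a₁, a₂, a₃, a₄] := by
    intro i j hij
    fin_cases i <;> fin_cases j <;>
      simp only [Fin.isValue, Fin.zero_eta, Fin.mk_one, Fin.reduceFinMk, Matrix.cons_val,
        Matrix.cons_val_zero, Matrix.cons_val_one] at hij ⊢ <;>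
      grind [Adj.ne]
  refine ⟨⟨_, hinj⟩, fun i j hij => ?_⟩
  change G.Adj (![a₀, a₁, a₂, a₃, a₄] i) (![a₀, a₁, a₂, a₃, a₄] j)
  fin_cases i <;> fin_cases j <;>
    simp only [KmPk, top_sdiff', hnot_eq_compl, compl_adj, fromRel_adj, Fin.isValue, Fin.zero_eta,
      Fin.mk_one, Fin.reduceFinMk, Matrix.cons_val, Matrix.cons_val_zero,
      Matrix.cons_val_one] at hij ⊢ <;>
    grind [Adj.symm]

theorem stmt14 {V : Type*} [Fintype V] (G : SimpleGraph V)
    (v1 v2 v3 v4 y1 y2 y3 : V)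
    (h12 : G.Adj v1 v2) (h13 : G.Adj v1 v3) (h14 : G.Adj v1 v4)
    (h23 : G.Adj v2 v3) (h24 : G.Adj v2 v4) (h34 : G.Adj v3 v4)
    (hy1 : G.Adj v1 y1) (hy1d : y1 ≠ v2 ∧ y1 ≠ v3 ∧ y1 ≠ v4)
    (hy1n : ¬ G.Adj y1 v2 ∧ ¬ G.Adj y1 v3 ∧ ¬ G.Adj y1 v4)
    (hy2 : G.Adj v2 y2) (hy2d : y2 ≠ v1 ∧ y2 ≠ v3 ∧ y2 ≠ v4)
    (hy2n : ¬ G.Adj y2 v1 ∧ ¬ G.Adj y2 v3 ∧ ¬ G.Adj y2 v4)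
    (hy3 : G.Adj y1 y3) (hy3v1 : G.Adj y3 v1)
    (hy3n : ¬ G.Adj y3 v2 ∧ ¬ G.Adj y3 v3 ∧ ¬ G.Adj y3 v4)
    (hy3d : y3 ≠ v2 ∧ y3 ≠ v3 ∧ y3 ≠ v4)
    (hyd : y1 ≠ y2 ∧ y1 ≠ y3 ∧ y2 ≠ y3) :
    degMS ((G \ SimpleGraph.fromEdgeSet {s(y1, y3), s(v1, v4), s(v2, y2)}) ⊔
        SimpleGraph.fromEdgeSet {s(y1, v2), s(y3, v4), s(y2, v1)}) = degMS G ∧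
    Contains ((G \ SimpleGraph.fromEdgeSet {s(y1, y3), s(v1, v4), s(v2, y2)}) ⊔
        SimpleGraph.fromEdgeSet {s(y1, v2), s(y3, v4), s(y2, v1)}) (KmPk 5 3) := by
  obtain ⟨hy1v2, hy1v3, hy1v4⟩ := hy1d
  obtain ⟨hy2v1, hy2v3, hy2v4⟩ := hy2d
  obtain ⟨hy3v2, hy3v3, hy3v4⟩ := hy3d
  obtain ⟨hy1y2, hy1y3, hy2y3⟩ := hyd
  have hR : ({s(y1, y3), s(v1, v4), s(v2, y2)} : Set (Sym2 V)) =
      {s(y1, y3), s(v4, v1), s(y2, v2)} := by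
    ext; simp only [Set.mem_insert_iff, Set.mem_singleton_iff, Sym2.eq_swap]
  have hA : ({s(y1, v2), s(y3, v4), s(y2, v1)} : Set (Sym2 V)) =
      {s(y3, v4), s(v1, y2), s(v2, y1)} := by
    ext; simp only [Set.mem_insert_iff, Set.mem_singleton_iff, Sym2.eq_swap]; tauto
  refine ⟨?_, ?_⟩
  · rw [hR, hA]
    refine degMS_exchangeEdges_hexagon ?_ hy3 h14.symm hy2.symm hy3n.2.2 (hy2n.1 ·.symm)
      (hy1n.1 ·.symm)
    simp only [List.nodup_cons, List.mem_cons, List.not_mem_nil, not_or, List.nodup_nil]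
    grind [Adj.ne]
  · refine contains_kmPk_five_three (a₃ := v3) h14.ne hy1v4.symm hy1v3
      (exchangeEdges_adj_of_adj hy1 ?_) (exchangeEdges_adj_of_adj h13 ?_)
      (exchangeEdges_adj_of_adj h12 ?_) (exchangeEdges_adj_of_adj h34.symm ?_)
      (exchangeEdges_adj_of_adj h24.symm ?_) (exchangeEdges_adj_of_mem (by simp) hy1v2)
      (exchangeEdges_adj_of_adj h23.symm ?_) <;>
    simp only [Set.mem_insert_iff, Set.mem_singleton_iff, Sym2.eq_iff] <;>
    grind [Adj.ne]
end
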